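/- (Stability of linear-quadratic tilts in the quadratic parameter.) Let μ be a probability measure on ℝ and d0 > 0, and suppose there exist ε ∈ (0, d0/2) and C > 0 such that for all d ∈ (d0 − ε, d0 + ε): the mean of B_{0,d}(μ) is bounded in absolute value by C and ‖B_{t,d}(μ)‖_{ψ2} ≤ C(1 + |t|) for all t ∈ ℝ. Then: (i) there is a constant K such that for all t ∈ ℝ and all d, d' ∈ (d0 − ε, d0 + ε), |log ∫ exp(t·b − d·b²/2) dμ(b) − log ∫ exp(t·b − d'·b²/2) dμ(b)| ≤ K|d − d'|(1 + |t|⁶); and (ii) for every r > 0 there is a constant K_r such that for every measurable h : ℝ → ℝ with |h(b)| ≤ 1 + |b|^r, all t ∈ ℝ, and all d, d' ∈ (d0 − ε, d0 + ε), |∫ h dB_{t,d}(μ) − ∫ h dB_{t,d'}(μ)| ≤ K_r |d − d'| (1 + |t|^{3(r+2)}). -/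

import Mathlib

open MeasureTheory ProbabilityTheory Real Filter

noncomputable section

/-- `SubGaussianNormLE ρ K` : the MGF of `ρ` around its mean is bounded by `exp (K² t²/2)`;
equivalently, the sub-Gaussian norm of a random variable with law `ρ` is at most `K`. -/
def SubGaussianNormLE (ρ : Measure ℝ) (K : ℝ) : Prop :=
  ∀ t : ℝ, ∫ x, Real.exp (t * (x - ∫ y, y ∂ρ)) ∂ρ ≤ Real.exp (K ^ 2 * t ^ 2 / 2)

/-- The linear-quadratic tilt `B_{t,d}(μ)`: probability measure with density w.r.t. `μ`
proportional to `b ↦ exp (t b − d b²/2)`. -/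
def tiltLQ (μ : Measure ℝ) (t d : ℝ) : Measure ℝ :=
  ((μ.withDensity fun b => ENNReal.ofReal (Real.exp (t * b - d * b ^ 2 / 2))) Set.univ)⁻¹ •
    μ.withDensity fun b => ENNReal.ofReal (Real.exp (t * b - d * b ^ 2 / 2))


/-!
Write `Z(t, d) = ∫ exp (t b - d b² / 2) dμ` and `E_{t,d}` for expectation under `B_{t,d}(μ)`.
Differentiating under the integral in `d` gives `∂_d log Z = -E_{t,d}[b²] / 2` and
`∂_d E_{t,d}[h] = -(E_{t,d}[h b²] - E_{t,d}[h] E_{t,d}[b²]) / 2`, so by the mean value theorem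
both claims reduce to moment bounds `E_{t,d}|b|^s ≤ M_s (1 + |t|)^{3s}`.

In `t`, `B_{t,d}` is the exponential tilt of `B_{0,d}`, so its mean is the derivative of the
cumulant generating function of `B_{0,d}` and the derivative of the mean is the variance. The
sub-Gaussian bound makes the variance `O((1 + |t|)²)`; integrating from `0` gives
`|E_{t,d} b| = O((1 + |t|)³)`. Finally, with `B ≍ (1 + |t|)³` dominating both the mean and the
sub-Gaussian constant, `|x|^s ≤ (s B)^s (e^{x/B} + e^{-x/B})` and the sub-Gaussian bound at
`±1/B` give `E_{t,d}|b|^s = O(B^s)`.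
-/

open Topology

lemma one_add_rpow_le_two_rpow_mul {y p : ℝ} (hy : 0 ≤ y) (hp : 0 ≤ p) :
    (1 + y) ^ p ≤ 2 ^ p * (1 + y ^ p) := calc
  (1 + y) ^ p ≤ (2 * max 1 y) ^ p := by
    gcongr
    linarith [le_max_left 1 y, le_max_right 1 y]
  _ = 2 ^ p * max 1 (y ^ p) := by
    rw [mul_rpow zero_le_two (by positivity), rpow_max zero_le_one hy hp, one_rpow]
  _ ≤ 2 ^ p * (1 + y ^ p) := by gcongr; exact max_le_add_of_nonneg zero_le_one (by positivity)

lemma one_add_rpow_le_two_mul_one_add_rpow {y p : ℝ} (hy : 0 ≤ y) (hp : 0 ≤ p) :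
    1 + y ^ p ≤ 2 * (1 + y) ^ p := by
  have h1 : 1 ≤ (1 + y) ^ p := one_le_rpow (by linarith) hp
  have h2 : y ^ p ≤ (1 + y) ^ p := by gcongr; linarith
  linarith

lemma exists_one_add_abs_rpow_mul_exp_le (s a : ℝ) {c : ℝ} (hs : 0 ≤ s) (hc : 0 < c) :
    ∃ M, ∀ b : ℝ, (1 + |b|) ^ s * exp (a * |b| - c * b ^ 2 / 2) ≤ M := by
  refine ⟨s ^ s * exp (1 + (1 + a) ^ 2 / (2 * c)), fun b => ?_⟩
  have hpoly : (1 + |b|) ^ s ≤ s ^ s * exp (1 + |b|) := by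
    simpa [abs_of_nonneg (by positivity : (0 : ℝ) ≤ 1 + |b|)] using
      rpow_abs_le_mul_exp_abs (1 + |b|) hs one_ne_zero
  -- completing the square: `(1 + a) y - c y² / 2 ≤ (1 + a)² / (2c)`
  have hsq : 1 + |b| + (a * |b| - c * b ^ 2 / 2) ≤ 1 + (1 + a) ^ 2 / (2 * c) := by
    rw [← sq_abs b]
    have : 0 ≤ (c * |b| - (1 + a)) ^ 2 / (2 * c) := by positivity
    have he : (c * |b| - (1 + a)) ^ 2 / (2 * c)
        = (1 + a) ^ 2 / (2 * c) - ((1 + a) * |b| - c * |b| ^ 2 / 2) := by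
      field_simp; ring
    linarith
  calc (1 + |b|) ^ s * exp (a * |b| - c * b ^ 2 / 2)
      ≤ s ^ s * exp (1 + |b|) * exp (a * |b| - c * b ^ 2 / 2) := by gcongr
    _ = s ^ s * exp (1 + |b| + (a * |b| - c * b ^ 2 / 2)) := by rw [mul_assoc, ← exp_add]
    _ ≤ s ^ s * exp (1 + (1 + a) ^ 2 / (2 * c)) := by gcongr

lemma abs_sub_le_of_hasDerivAt {f f' : ℝ → ℝ} {S : Set ℝ} (hS : Convex ℝ S) {M : ℝ}
    (hf : ∀ x ∈ S, HasDerivAt f (f' x) x) (hM : ∀ x ∈ S, |f' x| ≤ M) {x y : ℝ}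
    (hx : x ∈ S) (hy : y ∈ S) : |f x - f y| ≤ M * |x - y| := by
  simpa only [Real.norm_eq_abs] using hS.norm_image_sub_le_of_norm_hasDerivWithin_le
    (fun z hz => (hf z hz).hasDerivWithinAt) (fun z hz => by simpa using hM z hz) hy hx

section SubGaussian

variable {ρ : Measure ℝ} {K B : ℝ}

lemma integral_exp_mul_sub_le_of_subGaussian (hρ : SubGaussianNormLE ρ K) {a c : ℝ}
    (hK : |K| ≤ B) (ha : |∫ x, x ∂ρ - a| ≤ B) (hc : |c| * B ≤ 1) :
    ∫ x, exp (c * (x - a)) ∂ρ ≤ exp (3 / 2) := by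
  set m := ∫ x, x ∂ρ
  have hshift : ∫ x, exp (c * (x - a)) ∂ρ = exp (c * (m - a)) * ∫ x, exp (c * (x - m)) ∂ρ := by
    rw [← integral_const_mul]
    congr 1 with x
    rw [← exp_add]; ring_nf
  have h1 : c * (m - a) ≤ 1 :=
    (le_abs_self _).trans (by rw [abs_mul]; nlinarith [abs_nonneg c, abs_nonneg (m - a)])
  have h2 : K ^ 2 * c ^ 2 / 2 ≤ 1 / 2 := by
    have : |K * c| ≤ 1 := by rw [abs_mul]; nlinarith [abs_nonneg c, abs_nonneg K]
    have := (sq_le_one_iff_abs_le_one _).2 this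
    nlinarith
  calc ∫ x, exp (c * (x - a)) ∂ρ = exp (c * (m - a)) * ∫ x, exp (c * (x - m)) ∂ρ := hshift
    _ ≤ exp 1 * exp (1 / 2) := by
      gcongr
      exact (hρ c).trans (exp_le_exp.2 h2)
    _ = exp (3 / 2) := by rw [← exp_add]; norm_num

lemma integral_abs_sub_rpow_le_of_subGaussian [IsProbabilityMeasure ρ]
    (hexp : ∀ c, Integrable (fun x => exp (c * x)) ρ)
    (hρ : SubGaussianNormLE ρ K) {a s : ℝ} (hB : 0 < B) (hK : |K| ≤ B)
    (ha : |∫ x, x ∂ρ - a| ≤ B) (hs : 0 ≤ s) :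
    ∫ x, |x - a| ^ s ∂ρ ≤ 2 * exp (3 / 2) * (s * B) ^ s := by
  have hexp' : ∀ c, Integrable (fun x => exp (c * (x - a))) ρ := fun c => by
    simpa [mul_sub, exp_sub] using (hexp c).div_const (exp (c * a))
  have hpt : ∀ x, |x - a| ^ s
      ≤ (s * B) ^ s * (exp (B⁻¹ * (x - a)) + exp (-B⁻¹ * (x - a))) := fun x => by
    have := rpow_abs_le_mul_max_exp (x - a) hs (inv_ne_zero hB.ne')
    rw [abs_inv, abs_of_pos hB, div_inv_eq_mul] at this
    exact this.trans (by gcongr; exact max_le_add_of_nonneg (exp_pos _).le (exp_pos _).le)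
  have hcB : |B⁻¹| * B ≤ 1 := by rw [abs_inv, abs_of_pos hB, inv_mul_cancel₀ hB.ne']
  have hcB' : |-B⁻¹| * B ≤ 1 := by rwa [abs_neg]
  calc ∫ x, |x - a| ^ s ∂ρ
      ≤ ∫ x, (s * B) ^ s * (exp (B⁻¹ * (x - a)) + exp (-B⁻¹ * (x - a))) ∂ρ :=
        integral_mono_of_nonneg (Eventually.of_forall fun x => by positivity)
          (((hexp' _).add (hexp' _)).const_mul _) (Eventually.of_forall hpt)
    _ = (s * B) ^ s * (∫ x, exp (B⁻¹ * (x - a)) ∂ρ + ∫ x, exp (-B⁻¹ * (x - a)) ∂ρ) := by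
        rw [integral_const_mul, integral_add (hexp' _) (hexp' _)]
    _ ≤ (s * B) ^ s * (exp (3 / 2) + exp (3 / 2)) := by
        gcongr <;> exact integral_exp_mul_sub_le_of_subGaussian hρ hK ha ‹_›
    _ = 2 * exp (3 / 2) * (s * B) ^ s := by ring

lemma variance_id_le_of_subGaussian [IsProbabilityMeasure ρ]
    (hexp : ∀ c, Integrable (fun x => exp (c * x)) ρ)
    (hρ : SubGaussianNormLE ρ K) (hK : 0 < K) :
    Var[fun x => x; ρ] ≤ 8 * exp (3 / 2) * K ^ 2 := by
  rw [variance_eq_integral aemeasurable_id']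
  have := integral_abs_sub_rpow_le_of_subGaussian hexp hρ hK (abs_of_pos hK).le
    (a := ∫ x, x ∂ρ) (by simpa using hK.le) zero_le_two
  simp only [rpow_two, sq_abs] at this
  linarith

end SubGaussian

lemma abs_integral_mul_sq_sub_le {ρ : Measure ℝ} [IsProbabilityMeasure ρ] {h : ℝ → ℝ} {r : ℝ}
    (hmom : ∀ s : ℝ, 0 ≤ s → Integrable (fun x => |x| ^ s) ρ) (hr : 0 ≤ r)
    (hh : ∀ x, |h x| ≤ 1 + |x| ^ r) :
    |∫ x, h x * x ^ 2 ∂ρ - (∫ x, h x ∂ρ) * ∫ x, x ^ 2 ∂ρ|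
      ≤ 2 * ∫ x, |x| ^ (2 : ℝ) ∂ρ + ∫ x, |x| ^ (r + 2) ∂ρ
        + (∫ x, |x| ^ r ∂ρ) * ∫ x, |x| ^ (2 : ℝ) ∂ρ := by
  have hsq : ∫ x, x ^ 2 ∂ρ = ∫ x, |x| ^ (2 : ℝ) ∂ρ := by simp only [rpow_two, sq_abs]
  have hA : |∫ x, h x * x ^ 2 ∂ρ| ≤ ∫ x, |x| ^ (2 : ℝ) ∂ρ + ∫ x, |x| ^ (r + 2) ∂ρ := by
    rw [← integral_add (hmom 2 zero_le_two) (hmom (r + 2) (by linarith))]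
    refine norm_integral_le_of_norm_le (f := fun x => h x * x ^ 2)
      ((hmom 2 zero_le_two).add (hmom (r + 2) (by linarith))) (Eventually.of_forall fun x => ?_)
    rw [Real.norm_eq_abs, abs_mul, abs_of_nonneg (sq_nonneg x), rpow_add' (abs_nonneg x)
      (by linarith), rpow_two, sq_abs]
    nlinarith [hh x, sq_nonneg x]
  have hB : |∫ x, h x ∂ρ| ≤ 1 + ∫ x, |x| ^ r ∂ρ := calc
    _ ≤ ∫ x, (1 + |x| ^ r) ∂ρ := norm_integral_le_of_norm_le (f := h)
          ((integrable_const 1).add (hmom r hr)) (Eventually.of_forall hh)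
    _ = 1 + ∫ x, |x| ^ r ∂ρ := by rw [integral_add (integrable_const 1) (hmom r hr)]; simp
  have hE : 0 ≤ ∫ x, |x| ^ (2 : ℝ) ∂ρ := integral_nonneg fun x => by positivity
  rw [hsq]
  calc _ ≤ |∫ x, h x * x ^ 2 ∂ρ| + |(∫ x, h x ∂ρ) * ∫ x, |x| ^ (2 : ℝ) ∂ρ| := abs_sub _ _
    _ = |∫ x, h x * x ^ 2 ∂ρ| + |∫ x, h x ∂ρ| * ∫ x, |x| ^ (2 : ℝ) ∂ρ := by
        rw [abs_mul, abs_of_nonneg hE]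
    _ ≤ _ := by nlinarith

section Tilt

variable {μ : Measure ℝ} {g : ℝ → ℝ} {t d D s : ℝ}

lemma exp_lq_le_of_le {c x : ℝ} (hcx : c ≤ x) (b : ℝ) :
    exp (t * b - x * b ^ 2 / 2) ≤ exp (|t| * |b| - c * b ^ 2 / 2) := by
  gcongr exp (?_ - ?_)
  · exact (le_abs_self _).trans (abs_mul t b).le
  · nlinarith [sq_nonneg b]

lemma exists_abs_mul_exp_lq_le (hs : 0 ≤ s) (hg : ∀ b, |g b| ≤ D * (1 + |b|) ^ s) (t : ℝ)
    {c : ℝ} (hc : 0 < c) : ∃ M, ∀ x, c ≤ x → ∀ b, |g b * exp (t * b - x * b ^ 2 / 2)| ≤ M := by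
  obtain ⟨M, hM⟩ := exists_one_add_abs_rpow_mul_exp_le s |t| hs hc
  have hD : 0 ≤ D := by simpa using (abs_nonneg (g 0)).trans (hg 0)
  refine ⟨D * M, fun x hx b => ?_⟩
  rw [abs_mul, abs_of_pos (exp_pos _)]
  calc |g b| * exp (t * b - x * b ^ 2 / 2)
      ≤ D * (1 + |b|) ^ s * exp (|t| * |b| - c * b ^ 2 / 2) :=
        mul_le_mul (hg b) (exp_lq_le_of_le hx b) (exp_pos _).le (by positivity)
    _ ≤ D * M := by rw [mul_assoc]; exact mul_le_mul_of_nonneg_left (hM b) hD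

lemma integrable_mul_exp_lq [IsFiniteMeasure μ] (hgm : AEStronglyMeasurable g μ) (hs : 0 ≤ s)
    (hg : ∀ b, |g b| ≤ D * (1 + |b|) ^ s) (t : ℝ) (hd : 0 < d) :
    Integrable (fun b => g b * exp (t * b - d * b ^ 2 / 2)) μ := by
  obtain ⟨M, hM⟩ := exists_abs_mul_exp_lq_le hs hg t hd
  exact Integrable.mono' (integrable_const M) (hgm.mul (by fun_prop))
    (Eventually.of_forall (hM d le_rfl))

lemma integrable_exp_lq [IsFiniteMeasure μ] (t : ℝ) (hd : 0 < d) :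
    Integrable (fun b => exp (t * b - d * b ^ 2 / 2)) μ := by
  simpa using integrable_mul_exp_lq (μ := μ) (g := fun _ => 1) (D := 1) (s := 0)
    aestronglyMeasurable_const le_rfl (fun b => by simp) t hd

lemma tiltLQ_eq_tilted [IsFiniteMeasure μ] (hd : 0 < d) :
    tiltLQ μ t d = μ.tilted (fun b => t * b - d * b ^ 2 / 2) := by
  rcases eq_zero_or_neZero μ with rfl | _
  · simp [tiltLQ]
  have hint := integrable_exp_lq (μ := μ) t hd
  have hZ : (μ.withDensity fun b => ENNReal.ofReal (exp (t * b - d * b ^ 2 / 2))) Set.univ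
      = ENNReal.ofReal (∫ b, exp (t * b - d * b ^ 2 / 2) ∂μ) := by
    rw [withDensity_apply _ MeasurableSet.univ, setLIntegral_univ,
      ofReal_integral_eq_lintegral_ofReal hint (Eventually.of_forall fun b => (exp_pos _).le)]
  have hpos := integral_exp_pos hint
  rw [tiltLQ, Measure.tilted, hZ, ← withDensity_smul' _ _ (by simpa using hpos)]
  congr 1 with b
  rw [Pi.smul_apply, smul_eq_mul, ENNReal.ofReal_div_of_pos hpos,
    ENNReal.div_eq_inv_mul]

lemma isProbabilityMeasure_tiltLQ [IsFiniteMeasure μ] [NeZero μ] (hd : 0 < d) :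
    IsProbabilityMeasure (tiltLQ μ t d) := by
  rw [tiltLQ_eq_tilted hd]
  exact isProbabilityMeasure_tilted (integrable_exp_lq t hd)

lemma integral_tiltLQ [IsFiniteMeasure μ] (hd : 0 < d) (g : ℝ → ℝ) :
    ∫ b, g b ∂(tiltLQ μ t d)
      = (∫ b, g b * exp (t * b - d * b ^ 2 / 2) ∂μ) / ∫ b, exp (t * b - d * b ^ 2 / 2) ∂μ := by
  rw [tiltLQ_eq_tilted hd, integral_tilted, ← integral_div]
  congr 1 with b
  rw [smul_eq_mul]
  ring

lemma integrable_tiltLQ [IsFiniteMeasure μ] (hgm : AEStronglyMeasurable g μ) (hs : 0 ≤ s)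
    (hg : ∀ b, |g b| ≤ D * (1 + |b|) ^ s) (hd : 0 < d) : Integrable g (tiltLQ μ t d) := by
  rw [tiltLQ_eq_tilted hd, integrable_tilted_iff (integrable_exp_lq t hd)]
  simpa only [smul_eq_mul, mul_comm] using integrable_mul_exp_lq hgm hs hg t hd

lemma integrable_exp_mul_tiltLQ [IsFiniteMeasure μ] (hd : 0 < d) (c : ℝ) :
    Integrable (fun x => exp (c * x)) (tiltLQ μ t d) := by
  rw [tiltLQ_eq_tilted hd, integrable_tilted_iff (integrable_exp_lq t hd)]
  convert integrable_exp_lq (μ := μ) (t + c) hd using 2 with b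
  rw [smul_eq_mul, ← exp_add]
  ring_nf

lemma integrable_abs_rpow_tiltLQ [IsFiniteMeasure μ] (t : ℝ) (hd : 0 < d) {s : ℝ} (hs : 0 ≤ s) :
    Integrable (fun x => |x| ^ s) (tiltLQ μ t d) :=
  integrable_tiltLQ (D := 1) (by fun_prop) hs
    (fun x => by rw [abs_of_nonneg (by positivity), one_mul]; gcongr; linarith) hd

lemma tiltLQ_eq_tilted_tiltLQ_zero [IsFiniteMeasure μ] (hd : 0 < d) :
    tiltLQ μ t d = (tiltLQ μ 0 d).tilted (fun b => t * b) := by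
  rw [tiltLQ_eq_tilted hd, tiltLQ_eq_tilted hd, tilted_tilted (integrable_exp_lq 0 hd)]
  congr 1 with b
  simp only [Pi.add_apply]
  ring

end Tilt

section QuadraticDerivative

variable {μ : Measure ℝ} [IsFiniteMeasure μ] {g : ℝ → ℝ} {t d D s : ℝ}

lemma hasDerivAt_integral_mul_exp_lq (hgm : AEStronglyMeasurable g μ) (hs : 0 ≤ s)
    (hg : ∀ b, |g b| ≤ D * (1 + |b|) ^ s) (t : ℝ) (hd : 0 < d) :
    HasDerivAt (fun x => ∫ b, g b * exp (t * b - x * b ^ 2 / 2) ∂μ)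
      (-(∫ b, g b * b ^ 2 * exp (t * b - d * b ^ 2 / 2) ∂μ) / 2) d := by
  have hD : 0 ≤ D := by simpa using (abs_nonneg (g 0)).trans (hg 0)
  have hg2 : ∀ b, |g b * b ^ 2| ≤ D * (1 + |b|) ^ (s + 2) := fun b => by
    have hsq : b ^ 2 ≤ (1 + |b|) ^ 2 := by nlinarith [abs_nonneg b, sq_abs b]
    rw [abs_mul, abs_of_nonneg (sq_nonneg b), rpow_add (by positivity), rpow_two, ← mul_assoc]
    exact mul_le_mul (hg b) hsq (sq_nonneg b) (by positivity)
  obtain ⟨M, hM⟩ := exists_abs_mul_exp_lq_le (by linarith) hg2 t (half_pos hd)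
  have hderiv : ∀ b x, HasDerivAt (fun x => g b * exp (t * b - x * b ^ 2 / 2))
      (-(g b * b ^ 2 * exp (t * b - x * b ^ 2 / 2)) / 2) x := fun b x =>
    (((((hasDerivAt_id' x).mul_const (b ^ 2)).div_const 2).const_sub (t * b)).exp.const_mul
      (g b)).congr_deriv (by ring)
  have key := hasDerivAt_integral_of_dominated_loc_of_deriv_le (μ := μ)
    (F := fun x b => g b * exp (t * b - x * b ^ 2 / 2))
    (F' := fun x b => -(g b * b ^ 2 * exp (t * b - x * b ^ 2 / 2)) / 2) (bound := fun _ => M / 2)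
    (Ioi_mem_nhds (half_lt_self hd)) (Eventually.of_forall fun x => hgm.mul (by fun_prop))
    (integrable_mul_exp_lq hgm hs hg t hd) (by fun_prop)
    (Eventually.of_forall fun b x hx => ?_) (integrable_const _)
    (Eventually.of_forall fun b x _ => hderiv b x)
  · rw [integral_div, integral_neg] at key
    exact key.2
  · rw [norm_div, norm_neg, Real.norm_eq_abs, Real.norm_two]
    linarith [hM x (le_of_lt hx) b]

lemma hasDerivAt_integral_exp_lq (t : ℝ) (hd : 0 < d) :
    HasDerivAt (fun x => ∫ b, exp (t * b - x * b ^ 2 / 2) ∂μ)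
      (-(∫ b, b ^ 2 * exp (t * b - d * b ^ 2 / 2) ∂μ) / 2) d := by
  simpa using hasDerivAt_integral_mul_exp_lq (μ := μ) (g := fun _ => 1) (D := 1) (s := 0)
    aestronglyMeasurable_const le_rfl (fun b => by simp) t hd

variable [NeZero μ]

lemma hasDerivAt_log_integral_exp_lq (t : ℝ) (hd : 0 < d) :
    HasDerivAt (fun x => log (∫ b, exp (t * b - x * b ^ 2 / 2) ∂μ))
      (-(∫ b, b ^ 2 ∂(tiltLQ μ t d)) / 2) d := by
  convert (hasDerivAt_integral_exp_lq t hd).log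
    (integral_exp_pos (integrable_exp_lq (μ := μ) t hd)).ne' using 1
  rw [integral_tiltLQ hd]
  ring

lemma hasDerivAt_integral_tiltLQ (hgm : AEStronglyMeasurable g μ) (hs : 0 ≤ s)
    (hg : ∀ b, |g b| ≤ D * (1 + |b|) ^ s) (t : ℝ) (hd : 0 < d) :
    HasDerivAt (fun x => ∫ b, g b ∂(tiltLQ μ t x))
      (-(∫ b, g b * b ^ 2 ∂(tiltLQ μ t d)
        - (∫ b, g b ∂(tiltLQ μ t d)) * ∫ b, b ^ 2 ∂(tiltLQ μ t d)) / 2) d := by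
  have hZ := integral_exp_pos (integrable_exp_lq (μ := μ) t hd)
  have hquot := (hasDerivAt_integral_mul_exp_lq hgm hs hg t hd).div
    (hasDerivAt_integral_exp_lq t hd) hZ.ne'
  have heq : (fun x => ∫ b, g b ∂(tiltLQ μ t x)) =ᶠ[𝓝 d] fun x =>
      (∫ b, g b * exp (t * b - x * b ^ 2 / 2) ∂μ) / ∫ b, exp (t * b - x * b ^ 2 / 2) ∂μ :=
    eventually_of_mem (Ioi_mem_nhds hd) fun x hx => integral_tiltLQ hx g
  refine (hquot.congr_of_eventuallyEq heq).congr_deriv ?_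
  rw [integral_tiltLQ hd, integral_tiltLQ hd, integral_tiltLQ hd]
  generalize ∫ b, exp (t * b - d * b ^ 2 / 2) ∂μ = Z at hZ ⊢
  generalize ∫ b, g b * b ^ 2 * exp (t * b - d * b ^ 2 / 2) ∂μ = P
  generalize ∫ b, g b * exp (t * b - d * b ^ 2 / 2) ∂μ = Q
  generalize ∫ b, b ^ 2 * exp (t * b - d * b ^ 2 / 2) ∂μ = R
  field_simp
  ring

end QuadraticDerivative

section MomentBounds

variable {μ : Measure ℝ} [IsFiniteMeasure μ] {d C : ℝ}

lemma integrableExpSet_tiltLQ (hd : 0 < d) (t : ℝ) :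
    integrableExpSet (fun b => b) (tiltLQ μ t d) = Set.univ :=
  Set.eq_univ_of_forall (integrable_exp_mul_tiltLQ hd)

variable [NeZero μ]

lemma hasDerivAt_integral_id_tiltLQ (hd : 0 < d) (t : ℝ) :
    HasDerivAt (fun u => ∫ b, b ∂(tiltLQ μ u d)) Var[fun b => b; tiltLQ μ t d] t := by
  have := isProbabilityMeasure_tiltLQ (μ := μ) (t := 0) hd
  have hint : ∀ u, u ∈ interior (integrableExpSet (fun b : ℝ => b) (tiltLQ μ 0 d)) := by
    simp [integrableExpSet_tiltLQ hd]
  have hmean : (fun u => ∫ b, b ∂(tiltLQ μ u d)) = deriv (cgf (fun b => b) (tiltLQ μ 0 d)) := by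
    funext u
    rw [tiltLQ_eq_tilted_tiltLQ_zero (t := u) hd]
    exact integral_tilted_mul_self (hint u)
  rw [hmean, tiltLQ_eq_tilted_tiltLQ_zero (t := t) hd]
  refine (analyticAt_cgf (hint t)).deriv.differentiableAt.hasDerivAt.congr_deriv ?_
  have hvar := variance_tilted_mul (hint t)
  rw [iteratedDeriv_succ, iteratedDeriv_one] at hvar
  exact hvar.symm

def momentConst (C s : ℝ) : ℝ := 2 * exp (3 / 2) * (s * (C + 8 * exp (3 / 2) * C ^ 2)) ^ s

variable (hC : 0 < C) (hmean : |∫ b, b ∂(tiltLQ μ 0 d)| ≤ C)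
  (hsub : ∀ t, SubGaussianNormLE (tiltLQ μ t d) (C * (1 + |t|)))
include hC hmean hsub

lemma abs_integral_id_tiltLQ_le (hd : 0 < d) (t : ℝ) :
    |∫ b, b ∂(tiltLQ μ t d)| ≤ (C + 8 * exp (3 / 2) * C ^ 2) * (1 + |t|) ^ 3 := by
  set V := 8 * exp (3 / 2) * C ^ 2
  have hvar : ∀ u ∈ Set.Icc (-|t|) |t|, |Var[fun b => b; tiltLQ μ u d]| ≤ V * (1 + |t|) ^ 2 :=
    fun u hu => by
      have := isProbabilityMeasure_tiltLQ (μ := μ) (t := u) hd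
      rw [abs_of_nonneg (variance_nonneg _ _)]
      calc Var[fun b => b; tiltLQ μ u d] ≤ 8 * exp (3 / 2) * (C * (1 + |u|)) ^ 2 :=
            variance_id_le_of_subGaussian (integrable_exp_mul_tiltLQ hd) (hsub u) (by positivity)
        _ ≤ V * (1 + |t|) ^ 2 := by
            have : |u| ≤ |t| := abs_le.2 hu
            rw [mul_pow, ← mul_assoc]
            gcongr
  have hdiff := abs_sub_le_of_hasDerivAt (convex_Icc (-|t|) |t|)
    (fun u _ => hasDerivAt_integral_id_tiltLQ hd u) hvar
    ⟨neg_abs_le t, le_abs_self t⟩ ⟨by simp, abs_nonneg t⟩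
  rw [sub_zero] at hdiff
  have h1 : 1 ≤ (1 + |t|) ^ 3 := one_le_pow₀ (by linarith [abs_nonneg t])
  have h2 : (1 + |t|) ^ 2 * |t| ≤ (1 + |t|) ^ 3 := by
    rw [pow_succ (1 + |t|) 2]
    gcongr
    linarith
  have hV : 0 ≤ V := by positivity
  have htri := abs_sub_abs_le_abs_sub (∫ b, b ∂(tiltLQ μ t d)) (∫ b, b ∂(tiltLQ μ 0 d))
  nlinarith [mul_le_mul_of_nonneg_left h2 hV, mul_le_mul_of_nonneg_left h1 hC.le]

lemma integral_abs_rpow_tiltLQ_le (hd : 0 < d) (t : ℝ) {s : ℝ} (hs : 0 ≤ s) :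
    ∫ b, |b| ^ s ∂(tiltLQ μ t d) ≤ momentConst C s * (1 + |t|) ^ (3 * s) := by
  have := isProbabilityMeasure_tiltLQ (μ := μ) (t := t) hd
  set L := C + 8 * exp (3 / 2) * C ^ 2
  have hCL : C ≤ L := le_add_of_nonneg_right (by positivity)
  have hP : 1 ≤ 1 + |t| := by linarith [abs_nonneg t]
  have hK : |C * (1 + |t|)| ≤ L * (1 + |t|) ^ 3 := by
    rw [abs_of_pos (by positivity)]
    exact mul_le_mul hCL (le_self_pow₀ hP (by norm_num)) (by positivity) (by positivity)
  have hmom := integral_abs_sub_rpow_le_of_subGaussian (integrable_exp_mul_tiltLQ hd) (hsub t)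
    (a := 0) (by positivity) hK (by simpa using abs_integral_id_tiltLQ_le hC hmean hsub hd t) hs
  simp only [sub_zero] at hmom
  calc ∫ b, |b| ^ s ∂(tiltLQ μ t d) ≤ 2 * exp (3 / 2) * (s * (L * (1 + |t|) ^ 3)) ^ s := hmom
    _ = momentConst C s * (1 + |t|) ^ (3 * s) := by
      rw [momentConst, ← mul_assoc s, mul_rpow (by positivity) (by positivity),
        ← rpow_natCast, ← rpow_mul (by positivity)]
      push_cast
      ring

lemma abs_integral_mul_sq_tiltLQ_sub_le (hd : 0 < d) {r : ℝ} (hr : 0 ≤ r) {h : ℝ → ℝ}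
    (hh : ∀ b, |h b| ≤ 1 + |b| ^ r) (t : ℝ) :
    |∫ b, h b * b ^ 2 ∂(tiltLQ μ t d) - (∫ b, h b ∂(tiltLQ μ t d)) * ∫ b, b ^ 2 ∂(tiltLQ μ t d)|
      ≤ (2 * momentConst C 2 + momentConst C (r + 2) + momentConst C r * momentConst C 2)
        * (1 + |t|) ^ (3 * (r + 2)) := by
  have := isProbabilityMeasure_tiltLQ (μ := μ) (t := t) hd
  have hmom := fun s (hs : 0 ≤ s) => integral_abs_rpow_tiltLQ_le hC hmean hsub hd t hs
  have h2 := hmom 2 zero_le_two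
  have hr' := hmom r hr
  have hr2 := hmom (r + 2) (by linarith)
  set P := 1 + |t|
  have hP : 1 ≤ P := by linarith [abs_nonneg t]
  have h6 : P ^ (3 * 2 : ℝ) ≤ P ^ (3 * (r + 2)) := rpow_le_rpow_of_exponent_le hP (by linarith)
  have hsplit : P ^ (3 * r) * P ^ (3 * 2 : ℝ) = P ^ (3 * (r + 2)) := by
    rw [← rpow_add (by linarith)]; ring_nf
  have hM2 : 0 ≤ momentConst C 2 := by unfold momentConst; positivity
  have hMr : 0 ≤ momentConst C r := by unfold momentConst; positivity
  have hE2 : 0 ≤ ∫ b, |b| ^ (2 : ℝ) ∂(tiltLQ μ t d) := integral_nonneg fun b => by positivity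
  have hEr : 0 ≤ ∫ b, |b| ^ r ∂(tiltLQ μ t d) := integral_nonneg fun b => by positivity
  have hprod : (∫ b, |b| ^ r ∂(tiltLQ μ t d)) * ∫ b, |b| ^ (2 : ℝ) ∂(tiltLQ μ t d)
      ≤ momentConst C r * momentConst C 2 * P ^ (3 * (r + 2)) := by
    rw [← hsplit]
    calc _ ≤ (momentConst C r * P ^ (3 * r)) * (momentConst C 2 * P ^ (3 * 2 : ℝ)) :=
          mul_le_mul hr' h2 hE2 (by positivity)
      _ = _ := by ring
  refine (abs_integral_mul_sq_sub_le (fun s hs => integrable_abs_rpow_tiltLQ t hd hs) hr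
    hh).trans ?_
  nlinarith [mul_le_mul_of_nonneg_left h6 hM2]

end MomentBounds

section Lipschitz

variable {μ : Measure ℝ} [IsFiniteMeasure μ] [NeZero μ] {S : Set ℝ} {C : ℝ}
  (hS : Convex ℝ S) (hSpos : ∀ d ∈ S, 0 < d) (hC : 0 < C)
  (hmean : ∀ d ∈ S, |∫ b, b ∂(tiltLQ μ 0 d)| ≤ C)
  (hsub : ∀ d ∈ S, ∀ t, SubGaussianNormLE (tiltLQ μ t d) (C * (1 + |t|)))
include hS hSpos hC hmean hsub

lemma exists_abs_log_integral_exp_lq_sub_le :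
    ∃ K : ℝ, 0 < K ∧ ∀ t : ℝ, ∀ d ∈ S, ∀ d' ∈ S,
      |log (∫ b, exp (t * b - d * b ^ 2 / 2) ∂μ) - log (∫ b, exp (t * b - d' * b ^ 2 / 2) ∂μ)|
        ≤ K * |d - d'| * (1 + |t| ^ (6 : ℕ)) := by
  have hM : 0 < momentConst C 2 := by unfold momentConst; positivity
  refine ⟨32 * momentConst C 2, by positivity, fun t d hd d' hd' => ?_⟩
  have hP := one_add_rpow_le_two_rpow_mul (abs_nonneg t) (by norm_num : (0 : ℝ) ≤ 3 * 2)
  rw [show (3 * 2 : ℝ) = (6 : ℕ) by norm_num] at hP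
  simp only [rpow_natCast] at hP
  have hbound : ∀ x ∈ S, |-(∫ b, b ^ 2 ∂(tiltLQ μ t x)) / 2|
      ≤ 32 * momentConst C 2 * (1 + |t| ^ (6 : ℕ)) := fun x hx => by
    have hm := integral_abs_rpow_tiltLQ_le hC (hmean x hx) (hsub x hx) (hSpos x hx) t zero_le_two
    rw [show (3 * 2 : ℝ) = (6 : ℕ) by norm_num, rpow_natCast] at hm
    simp only [rpow_two, sq_abs] at hm
    rw [abs_div, abs_neg, abs_two, abs_of_nonneg (integral_nonneg fun b => sq_nonneg b)]
    nlinarith [mul_le_mul_of_nonneg_left hP hM.le]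
  calc _ ≤ 32 * momentConst C 2 * (1 + |t| ^ (6 : ℕ)) * |d - d'| :=
        abs_sub_le_of_hasDerivAt hS (fun x hx => hasDerivAt_log_integral_exp_lq t (hSpos x hx))
          hbound hd hd'
    _ = _ := by ring

lemma exists_abs_integral_tiltLQ_sub_le {r : ℝ} (hr : 0 < r) :
    ∃ K : ℝ, 0 < K ∧ ∀ h : ℝ → ℝ, Measurable h → (∀ b, |h b| ≤ 1 + |b| ^ r) →
      ∀ t : ℝ, ∀ d ∈ S, ∀ d' ∈ S,
        |∫ b, h b ∂(tiltLQ μ t d) - ∫ b, h b ∂(tiltLQ μ t d')|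
          ≤ K * |d - d'| * (1 + |t| ^ (3 * (r + 2))) := by
  set K := 2 * momentConst C 2 + momentConst C (r + 2) + momentConst C r * momentConst C 2
  have hK : 0 < K := by
    have : 0 < r + 2 := by linarith
    unfold K momentConst
    positivity
  refine ⟨K / 2 * 2 ^ (3 * (r + 2)), by positivity, fun h hm hh t d hd d' hd' => ?_⟩
  have hP := one_add_rpow_le_two_rpow_mul (abs_nonneg t) (by linarith : (0 : ℝ) ≤ 3 * (r + 2))
  have hbound : ∀ x ∈ S, |-(∫ b, h b * b ^ 2 ∂(tiltLQ μ t x)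
        - (∫ b, h b ∂(tiltLQ μ t x)) * ∫ b, b ^ 2 ∂(tiltLQ μ t x)) / 2|
      ≤ K / 2 * 2 ^ (3 * (r + 2)) * (1 + |t| ^ (3 * (r + 2))) := fun x hx => by
    have hcov := abs_integral_mul_sq_tiltLQ_sub_le hC (hmean x hx) (hsub x hx) (hSpos x hx)
      hr.le hh t
    rw [abs_div, abs_neg, abs_two]
    nlinarith [mul_le_mul_of_nonneg_left hP hK.le]
  have hh' : ∀ b, |h b| ≤ 2 * (1 + |b|) ^ r := fun b =>
    (hh b).trans (one_add_rpow_le_two_mul_one_add_rpow (abs_nonneg b) hr.le)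
  calc _ ≤ K / 2 * 2 ^ (3 * (r + 2)) * (1 + |t| ^ (3 * (r + 2))) * |d - d'| :=
        abs_sub_le_of_hasDerivAt hS
          (fun x hx => hasDerivAt_integral_tiltLQ hm.aestronglyMeasurable hr.le hh' t (hSpos x hx))
          hbound hd hd'
    _ = _ := by ring

end Lipschitz

theorem stmt_9_general (μ : Measure ℝ) (hμ : IsProbabilityMeasure μ)
    (d0 eps C : ℝ) (hd0 : 0 < d0) (hepsle : eps < d0 / 2) (hC : 0 < C)
    (hmean : ∀ d ∈ Set.Ioo (d0 - eps) (d0 + eps), |∫ b, b ∂(tiltLQ μ 0 d)| ≤ C)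
    (hsub : ∀ d ∈ Set.Ioo (d0 - eps) (d0 + eps), ∀ t : ℝ,
      SubGaussianNormLE (tiltLQ μ t d) (C * (1 + |t|))) :
    (∃ K : ℝ, 0 < K ∧ ∀ t : ℝ, ∀ d ∈ Set.Ioo (d0 - eps) (d0 + eps),
      ∀ d' ∈ Set.Ioo (d0 - eps) (d0 + eps),
        |Real.log (∫ b, Real.exp (t * b - d * b ^ 2 / 2) ∂μ)
            - Real.log (∫ b, Real.exp (t * b - d' * b ^ 2 / 2) ∂μ)|
          ≤ K * |d - d'| * (1 + |t| ^ (6 : ℕ))) ∧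
    (∀ r : ℝ, 0 < r → ∃ Kr : ℝ, 0 < Kr ∧
      ∀ h : ℝ → ℝ, Measurable h → (∀ b : ℝ, |h b| ≤ 1 + |b| ^ r) →
      ∀ t : ℝ, ∀ d ∈ Set.Ioo (d0 - eps) (d0 + eps), ∀ d' ∈ Set.Ioo (d0 - eps) (d0 + eps),
        |(∫ b, h b ∂(tiltLQ μ t d)) - ∫ b, h b ∂(tiltLQ μ t d')|
          ≤ Kr * |d - d'| * (1 + |t| ^ (3 * (r + 2)))) := by
  have hpos : ∀ d ∈ Set.Ioo (d0 - eps) (d0 + eps), 0 < d := fun d hd => by linarith [hd.1]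
  exact ⟨exists_abs_log_integral_exp_lq_sub_le (convex_Ioo _ _) hpos hC hmean hsub,
    fun r hr => exists_abs_integral_tiltLQ_sub_le (convex_Ioo _ _) hpos hC hmean hsub hr⟩

/-- **Stability of linear-quadratic tilts in the quadratic parameter.**
Under the same tilt regularity conditions: (i) the log-normalizing constants are Lipschitz in
`d` with constant of order `1 + |t|⁶`; and (ii) tilted expectations of functions of polynomial
growth of order `r` are Lipschitz in `d` with constant of order `1 + |t|^{3(r+2)}`. -/
theorem stmt_9 (μ : Measure ℝ) (hμ : IsProbabilityMeasure μ)
    (d0 eps C : ℝ) (hd0 : 0 < d0) (heps : 0 < eps) (hepsle : eps < d0 / 2) (hC : 0 < C)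
    (hmean : ∀ d ∈ Set.Ioo (d0 - eps) (d0 + eps), |∫ b, b ∂(tiltLQ μ 0 d)| ≤ C)
    (hsub : ∀ d ∈ Set.Ioo (d0 - eps) (d0 + eps), ∀ t : ℝ,
      SubGaussianNormLE (tiltLQ μ t d) (C * (1 + |t|))) :
    (∃ K : ℝ, 0 < K ∧ ∀ t : ℝ, ∀ d ∈ Set.Ioo (d0 - eps) (d0 + eps),
      ∀ d' ∈ Set.Ioo (d0 - eps) (d0 + eps),
        |Real.log (∫ b, Real.exp (t * b - d * b ^ 2 / 2) ∂μ)
            - Real.log (∫ b, Real.exp (t * b - d' * b ^ 2 / 2) ∂μ)|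
          ≤ K * |d - d'| * (1 + |t| ^ (6 : ℕ))) ∧
    (∀ r : ℝ, 0 < r → ∃ Kr : ℝ, 0 < Kr ∧
      ∀ h : ℝ → ℝ, Measurable h → (∀ b : ℝ, |h b| ≤ 1 + |b| ^ r) →
      ∀ t : ℝ, ∀ d ∈ Set.Ioo (d0 - eps) (d0 + eps), ∀ d' ∈ Set.Ioo (d0 - eps) (d0 + eps),
        |(∫ b, h b ∂(tiltLQ μ t d)) - ∫ b, h b ∂(tiltLQ μ t d')|
          ≤ Kr * |d - d'| * (1 + |t| ^ (3 * (r + 2)))) :=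
  stmt_9_general μ hμ d0 eps C hd0 hepsle hC hmean hsub
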